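/- Let z₁, z₂ be real numbers with 1 < z₁ < z₂, let k₁ be a real number that is not a nonnegative integer, let k₂ be real, let M₁ ∈ ℂ with M₁ ≠ 0 and M₂ ∈ ℂ, and define c_n = M₁ · γ_n(k₁) · (−1/z₁)^n + M₂ · γ_n(k₂) · (−1/z₂)^n for n ∈ ℕ (the Taylor coefficients of f(z) = M₁(1 − z/z₁)^{k₁} + M₂(1 − z/z₂)^{k₂}). Then: (a) c_n ≠ 0 for all sufficiently large n; (b) the ratio R_n = c_{n+1}/c_n satisfies lim_{n→∞} R_n = 1/z₁; and (c) the Domb–Sykes limit holds: lim_{n→∞} n · (1 − z₁ · R_n) = 1 + k₁. -/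

import Mathlib

/-!
Split off the coefficient `u n` of the nearest singularity: `c n = u n * (1 + d n)` with
`d n = v n / u n`. Since `d (n + 1) / d n → z₁ / z₂` and `|z₁ / z₂| < 1`, the ratio test shows that
even `n * d n → 0`. The principal part has the exact ratio `u (n + 1) / u n = (n - k₁) / ((n + 1) z₁)`,
so
`n (1 - z₁ R_n) = n / (n + 1) * ((1 + k₁) + (n + 1) d n - (n - k₁) d (n + 1)) / (1 + d n) → 1 + k₁`,
and dividing by `n` gives `z₁ R_n → 1`.
-/

/-- The generalized binomial coefficient γ_n(k) = k(k−1)⋯(k−n+1)/n!, with γ_0(k) = 1. -/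
noncomputable def genBinom (k : ℂ) (n : ℕ) : ℂ :=
  (∏ i ∈ Finset.range n, (k - i)) / (n.factorial : ℂ)

open Filter Topology

lemma genBinom_succ (k : ℂ) (n : ℕ) :
    genBinom k (n + 1) = genBinom k n * (k - n) / (n + 1) := by
  rw [genBinom, genBinom, Finset.prod_range_succ, Nat.factorial_succ]
  push_cast
  field_simp

lemma genBinom_ne_zero {k : ℂ} (hk : ∀ m : ℕ, k ≠ m) (n : ℕ) : genBinom k n ≠ 0 :=
  div_ne_zero (Finset.prod_ne_zero_iff.2 fun i _ => sub_ne_zero.2 (hk i))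
    (Nat.cast_ne_zero.2 n.factorial_ne_zero)

/-- The `n`-th Taylor coefficient of `x ↦ M (1 - x / z) ^ k` at `0`. -/
noncomputable def binomSeriesCoeff (M k z : ℂ) (n : ℕ) : ℂ :=
  M * genBinom k n * (-(1 / z)) ^ n

lemma binomSeriesCoeff_succ (M k z : ℂ) (n : ℕ) :
    binomSeriesCoeff M k z (n + 1) = binomSeriesCoeff M k z n * ((k - n) / (n + 1) * -(1 / z)) := by
  rw [binomSeriesCoeff, binomSeriesCoeff, genBinom_succ, pow_succ]
  ring

lemma binomSeriesCoeff_ne_zero {M k z : ℂ} (hM : M ≠ 0) (hk : ∀ m : ℕ, k ≠ m) (hz : z ≠ 0)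
    (n : ℕ) : binomSeriesCoeff M k z n ≠ 0 := by
  unfold binomSeriesCoeff
  have : -(1 / z) ≠ 0 := by simpa using hz
  exact mul_ne_zero (mul_ne_zero hM (genBinom_ne_zero hk n)) (pow_ne_zero n this)

section RCLike

variable {𝕜 : Type*} [RCLike 𝕜]

lemma tendsto_sub_natCast_div_natCast_add_one (k : 𝕜) :
    Tendsto (fun n : ℕ => (k - n) / (n + 1)) atTop (𝓝 (-1)) := by
  have h := ((tendsto_const_nhds (x := k)).mul
    (tendsto_one_div_add_atTop_nhds_zero_nat (𝕜 := 𝕜))).sub (tendsto_natCast_div_add_atTop (1 : 𝕜))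
  simp only [mul_zero, zero_sub, mul_one_div] at h
  refine h.congr fun n => ?_
  ring

lemma tendsto_zero_of_tendsto_natCast_mul {x : ℕ → 𝕜} {L : 𝕜}
    (h : Tendsto (fun n : ℕ => (n : 𝕜) * x n) atTop (𝓝 L)) : Tendsto x atTop (𝓝 0) := by
  have := h.mul (tendsto_one_div_atTop_nhds_zero_nat (𝕜 := 𝕜))
  rw [mul_zero] at this
  refine this.congr' ?_
  filter_upwards [eventually_ne_atTop 0] with n hn
  have : (n : 𝕜) ≠ 0 := Nat.cast_ne_zero.2 hn
  field_simp

lemma tendsto_natCast_mul_nhds_zero_of_succ_eq_mul {d T : ℕ → 𝕜} {t : 𝕜} (ht : ‖t‖ < 1)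
    (hT : Tendsto T atTop (𝓝 t)) (hd : ∀ n, d (n + 1) = d n * T n) :
    Tendsto (fun n : ℕ => (n : 𝕜) * d n) atTop (𝓝 0) := by
  obtain ⟨r, htr, hr⟩ := exists_between ht
  have hS : Tendsto (fun n : ℕ => (1 + 1 / (n : 𝕜)) * T n) atTop (𝓝 t) := by
    simpa using ((tendsto_const_nhds (x := (1 : 𝕜))).add
      (tendsto_one_div_atTop_nhds_zero_nat (𝕜 := 𝕜))).mul hT
  have hratio : ∀ᶠ n : ℕ in atTop,
      ‖((n + 1 : ℕ) : 𝕜) * d (n + 1)‖ ≤ r * ‖(n : 𝕜) * d n‖ := by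
    filter_upwards [hS.norm.eventually (eventually_lt_nhds htr), eventually_ne_atTop 0]
      with n hlt hn
    have hn' : (n : 𝕜) ≠ 0 := Nat.cast_ne_zero.2 hn
    have heq : ((n + 1 : ℕ) : 𝕜) * d (n + 1) = (1 + 1 / (n : 𝕜)) * T n * ((n : 𝕜) * d n) := by
      rw [hd]; push_cast; field_simp
    rw [heq, norm_mul]
    exact mul_le_mul_of_nonneg_right hlt.le (norm_nonneg _)
  exact (summable_of_ratio_norm_eventually_le hr hratio).tendsto_atTop_zero

end RCLike

section DombSykes

variable {u d c : ℕ → ℂ} {k z : ℂ}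

lemma eventually_ne_zero_of_eq_mul_one_add (hu : ∀ n, u n ≠ 0) (hc : ∀ n, c n = u n * (1 + d n))
    (hd : Tendsto d atTop (𝓝 0)) : ∀ᶠ n in atTop, c n ≠ 0 := by
  have h1d : Tendsto (fun n => 1 + d n) atTop (𝓝 1) := by
    simpa using tendsto_const_nhds.add hd
  filter_upwards [h1d.eventually_ne one_ne_zero] with n hn
  rw [hc]
  exact mul_ne_zero (hu n) hn

lemma tendsto_natCast_mul_one_sub_mul_ratio (hz : z ≠ 0) (hu : ∀ n, u n ≠ 0)
    (hu_succ : ∀ n, u (n + 1) = u n * ((k - n) / (n + 1) * -(1 / z)))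
    (hc : ∀ n, c n = u n * (1 + d n)) (hd : Tendsto (fun n : ℕ => (n : ℂ) * d n) atTop (𝓝 0)) :
    Tendsto (fun n : ℕ => (n : ℂ) * (1 - z * (c (n + 1) / c n))) atTop (𝓝 (1 + k)) := by
  have hd₀ : Tendsto d atTop (𝓝 0) := tendsto_zero_of_tendsto_natCast_mul hd
  have hd₁ : Tendsto (fun n : ℕ => ((n : ℂ) + 1) * d n) atTop (𝓝 0) := by
    simpa [add_mul] using hd.add hd₀
  have hd₂ : Tendsto (fun n : ℕ => ((n : ℂ) - k) * d (n + 1)) atTop (𝓝 0) := by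
    have := (hd.comp (tendsto_add_atTop_nat 1)).sub
      ((tendsto_const_nhds (x := 1 + k)).mul (hd₀.comp (tendsto_add_atTop_nat 1)))
    simp only [Function.comp_def, Nat.cast_add, Nat.cast_one, mul_zero, sub_zero] at this
    refine this.congr fun n => ?_
    ring
  have hlim := (((tendsto_natCast_div_add_atTop (1 : ℂ)).mul
    ((tendsto_const_nhds (x := 1 + k)).add hd₁ |>.sub hd₂)).div
    ((tendsto_const_nhds (x := (1 : ℂ))).add hd₀) (by simp))
  simp only [add_zero, sub_zero, one_mul, div_one, Pi.div_def] at hlim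
  refine hlim.congr' ?_
  filter_upwards [eventually_ne_zero_of_eq_mul_one_add hu hc hd₀] with n hn
  have h1d : 1 + d n ≠ 0 := fun h => hn (by rw [hc, h, mul_zero])
  have hn1 : (n : ℂ) + 1 ≠ 0 := Nat.cast_add_one_ne_zero n
  rw [hc, hc, hu_succ]
  field_simp [hu n]
  ring

lemma tendsto_ratio_of_tendsto_natCast_mul_one_sub_mul {L : ℂ} (hz : z ≠ 0)
    (h : Tendsto (fun n : ℕ => (n : ℂ) * (1 - z * (c (n + 1) / c n))) atTop (𝓝 L)) :
    Tendsto (fun n => c (n + 1) / c n) atTop (𝓝 (1 / z)) := by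
  have := ((tendsto_const_nhds (x := (1 : ℂ))).sub
    (tendsto_zero_of_tendsto_natCast_mul h)).div_const z
  rw [sub_zero] at this
  refine this.congr fun n => ?_
  field_simp
  ring

end DombSykes

lemma tendsto_binomSeriesCoeff_ratio (k z : ℂ) :
    Tendsto (fun n : ℕ => (k - n) / (n + 1) * -(1 / z)) atTop (𝓝 (1 / z)) := by
  simpa using (tendsto_sub_natCast_div_natCast_add_one k).mul_const (-(1 / z))

/-- The Domb–Sykes asymptotics of §8, equations (27)–(28): for the Taylor coefficients
c_n of f(z) = M₁(1 − z/z₁)^{k₁} + M₂(1 − z/z₂)^{k₂} with 1 < z₁ < z₂, k₁ not a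
nonnegative integer and M₁ ≠ 0: (a) c_n ≠ 0 for all large n, (b) R_n = c_{n+1}/c_n → 1/z₁,
and (c) n(1 − z₁R_n) → 1 + k₁. -/
theorem stmt_17 (z₁ z₂ : ℝ) (h1 : 1 < z₁) (h12 : z₁ < z₂) (k₁ k₂ : ℝ)
    (hk₁ : ∀ m : ℕ, k₁ ≠ (m : ℝ)) (M₁ M₂ : ℂ) (hM₁ : M₁ ≠ 0) (c : ℕ → ℂ)
    (hc : ∀ n : ℕ, c n = M₁ * genBinom (k₁ : ℂ) n * (-(1 / (z₁ : ℂ))) ^ n +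
        M₂ * genBinom (k₂ : ℂ) n * (-(1 / (z₂ : ℂ))) ^ n) :
    (∃ N : ℕ, ∀ n ≥ N, c n ≠ 0) ∧
    Filter.Tendsto (fun n : ℕ => c (n + 1) / c n) Filter.atTop (nhds (1 / (z₁ : ℂ))) ∧
    Filter.Tendsto (fun n : ℕ => (n : ℂ) * (1 - (z₁ : ℂ) * (c (n + 1) / c n)))
      Filter.atTop (nhds (1 + (k₁ : ℂ))) := by
  have hz₁ : (z₁ : ℂ) ≠ 0 := by exact_mod_cast (zero_lt_one.trans h1).ne'
  set u := binomSeriesCoeff M₁ k₁ z₁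
  set v := binomSeriesCoeff M₂ k₂ z₂
  have hu : ∀ n, u n ≠ 0 :=
    binomSeriesCoeff_ne_zero hM₁ (fun m h => hk₁ m (by exact_mod_cast h)) hz₁
  have hcuv : ∀ n, c n = u n * (1 + v n / u n) := fun n => by
    rw [hc, mul_add, mul_div_cancel₀ _ (hu n), mul_one]; rfl
  have hz₁₂ : ‖(1 / z₂ : ℂ) / (1 / z₁)‖ < 1 := by
    have hz₂ : 0 < z₂ := zero_lt_one.trans (h1.trans h12)
    rw [div_div_div_cancel_left' _ _ one_ne_zero, ← Complex.ofReal_div, Complex.norm_real,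
      Real.norm_of_nonneg (by positivity)]
    exact (div_lt_one hz₂).2 h12
  have hvu : Tendsto (fun n : ℕ => (n : ℂ) * (v n / u n)) atTop (𝓝 0) := by
    refine tendsto_natCast_mul_nhds_zero_of_succ_eq_mul hz₁₂
      ((tendsto_binomSeriesCoeff_ratio k₂ z₂).div (tendsto_binomSeriesCoeff_ratio k₁ z₁)
        (by simpa using hz₁)) fun n => ?_
    simp only [u, v, binomSeriesCoeff_succ, Pi.div_apply]
    exact mul_div_mul_comm _ _ _ _
  have hDS := tendsto_natCast_mul_one_sub_mul_ratio hz₁ hu (binomSeriesCoeff_succ _ _ _) hcuv hvu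
  exact ⟨eventually_atTop.1 (eventually_ne_zero_of_eq_mul_one_add hu hcuv
      (tendsto_zero_of_tendsto_natCast_mul hvu)),
    tendsto_ratio_of_tendsto_natCast_mul_one_sub_mul hz₁ hDS, hDS⟩
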